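/- arXiv:0802.2580 — 4 statements merged into one kernel-verified Lean document; each statement's English description precedes it below -/
import Mathlib

section
/- For a Euclidean triangle with angles a_i considered as functions of the edge lengths via the cosine law, one has ∂a_i/∂l_j = −(∂a_i/∂l_i)·cos(a_k), where {i,j,k} = {1,2,3}. -/
/-!
Near a nondegenerate triangle the angle `a_i` is `arccos c_i` with
`c_i = (l_j² + l_k² - l_i²) / (2 l_j l_k)`. Differentiating the cosine law,
`∂c_i/∂l_i = -l_i / (l_j l_k)` while `∂c_i/∂l_j = (l_i / (l_j l_k)) · cos a_k`, so
`∂c_i/∂l_j = -(∂c_i/∂l_i) cos a_k`, and the chain rule through `arccos` multiplies both partials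
by the same factor `-1 / sin a_i`.
-/

open Real

open Filter Topology Function Set

/-- The cosine of the angle opposite the side `x` in a triangle with sides `x, y, z`. -/
noncomputable def cosLaw (x y z : ℝ) : ℝ := (y ^ 2 + z ^ 2 - x ^ 2) / (2 * y * z)

lemma hasDerivAt_cosLaw_opposite {x y z : ℝ} (hy : y ≠ 0) (hz : z ≠ 0) :
    HasDerivAt (fun t => cosLaw t y z) (-x / (y * z)) x :=
  (((hasDerivAt_pow 2 x).const_sub (y ^ 2 + z ^ 2)).div_const (2 * y * z)).congr_deriv <| by
    field_simp; ring

lemma hasDerivAt_cosLaw_adjacent {x y z : ℝ} (hx : x ≠ 0) (hy : y ≠ 0) (hz : z ≠ 0) :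
    HasDerivAt (fun t => cosLaw x t z) (x / (y * z) * cosLaw z x y) y := by
  have hnum := ((hasDerivAt_pow 2 y).add_const (z ^ 2)).sub_const (x ^ 2)
  have hden := ((hasDerivAt_id' y).const_mul 2).mul_const z
  refine (hnum.div hden (by simp [hy, hz])).congr_deriv ?_
  simp only [cosLaw]
  field_simp
  ring

lemma cos_mem_Ioo_of_mem_Ioo {θ : ℝ} (hθ : θ ∈ Ioo 0 π) : cos θ ∈ Ioo (-1) 1 := by
  have hθ' : θ ∈ Icc 0 π := Ioo_subset_Icc_self hθ
  constructor
  · simpa using strictAntiOn_cos hθ' ⟨pi_pos.le, le_rfl⟩ hθ.2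
  · simpa using strictAntiOn_cos ⟨le_rfl, pi_pos.le⟩ hθ' hθ.1

def IsTriangle {ι : Type*} (x : ι → ℝ) : Prop :=
  (∀ i, 0 < x i) ∧ ∀ i j k, i ≠ j → j ≠ k → i ≠ k → x i < x j + x k

section

variable {ι : Type*} [Finite ι]

lemma isOpen_setOf_isTriangle : IsOpen {x : ι → ℝ | IsTriangle x} := by
  simp only [IsTriangle, Set.ofPred_and, Set.ofPred_forall]
  refine (isOpen_iInter_of_finite fun i => isOpen_lt continuous_const (continuous_apply i)).inter
    (isOpen_iInter_of_finite fun i => isOpen_iInter_of_finite fun j => isOpen_iInter_of_finite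
      fun k => isOpen_iInter_of_finite fun _ => isOpen_iInter_of_finite fun _ =>
        isOpen_iInter_of_finite fun _ => ?_)
  exact isOpen_lt (continuous_apply i) ((continuous_apply j).add (continuous_apply k))

variable [DecidableEq ι]

lemma IsTriangle.eventually_update {l : ι → ℝ} (hl : IsTriangle l) (m : ι) :
    ∀ᶠ t in 𝓝 (l m), IsTriangle (update l m t) := by
  have h : Tendsto (update l m) (𝓝 (l m)) (𝓝 l) := by
    simpa using ((continuous_const (y := l)).update m continuous_id).tendsto (l m)
  exact h.eventually (isOpen_setOf_isTriangle.mem_nhds hl)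

/-- Near a triangle `l` the angle is `arccos ∘ cosLaw`, since being a triangle is an open
condition. -/
lemma hasDerivAt_angle_update (a : (ι → ℝ) → ℝ) {i j k : ι}
    (ha : ∀ x, IsTriangle x → a x ∈ Ioo 0 π ∧ cos (a x) = cosLaw (x i) (x j) (x k))
    {l : ι → ℝ} (hl : IsTriangle l) (m : ι) {c' : ℝ}
    (hc' : HasDerivAt (fun t => cosLaw (update l m t i) (update l m t j) (update l m t k))
      c' (l m)) :
    HasDerivAt (fun t => a (update l m t))
      (-(1 / √(1 - cosLaw (l i) (l j) (l k) ^ 2)) * c') (l m) := by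
  have hc : cosLaw (l i) (l j) (l k) ∈ Ioo (-1) 1 :=
    (ha l hl).2 ▸ cos_mem_Ioo_of_mem_Ioo (ha l hl).1
  refine ((hasDerivAt_arccos hc.1.ne' hc.2.ne).comp_of_eq (l m) hc' (by simp))
    |>.congr_of_eventuallyEq ?_
  filter_upwards [hl.eventually_update m] with t ht
  obtain ⟨hmem, hcos⟩ := ha _ ht
  rw [comp_apply, ← hcos, arccos_cos hmem.1.le hmem.2.le]

end

/-- For a Euclidean triangle with angles `a_i ∈ (0,π)` determined from the
edge lengths by the cosine law, one has ∂a_i/∂l_j = −(∂a_i/∂l_i)·cos(a_k). -/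
theorem euclidean_deriv_angle_other
    (a : (Fin 3 → ℝ) → Fin 3 → ℝ)
    (ha : ∀ x : Fin 3 → ℝ, (∀ i, 0 < x i) →
      (∀ i j k : Fin 3, i ≠ j → j ≠ k → i ≠ k → x i < x j + x k) →
      ∀ i j k : Fin 3, i ≠ j → j ≠ k → i ≠ k →
        a x i ∈ Set.Ioo 0 π ∧
        Real.cos (a x i) = (x j ^ 2 + x k ^ 2 - x i ^ 2) / (2 * x j * x k))
    (l : Fin 3 → ℝ) (hl : ∀ i, 0 < l i)
    (htri : ∀ i j k : Fin 3, i ≠ j → j ≠ k → i ≠ k → l i < l j + l k)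
    (i j k : Fin 3) (hij : i ≠ j) (hjk : j ≠ k) (hik : i ≠ k)
    (d : ℝ) (hd : HasDerivAt (fun t => a (Function.update l i t) i) d (l i)) :
    HasDerivAt (fun t => a (Function.update l j t) i)
      (-d * Real.cos (a l k)) (l j) := by
  have hai : ∀ x, IsTriangle x → a x i ∈ Ioo 0 π ∧ cos (a x i) = cosLaw (x i) (x j) (x k) :=
    fun x hx => ha x hx.1 hx.2 i j k hij hjk hik
  have hdi := hasDerivAt_angle_update (a · i) hai ⟨hl, htri⟩ i <| by
    simpa [update_of_ne hij.symm, update_of_ne hik.symm] using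
      hasDerivAt_cosLaw_opposite (x := l i) (hl j).ne' (hl k).ne'
  have hdj := hasDerivAt_angle_update (a · i) hai ⟨hl, htri⟩ j <| by
    simpa [update_of_ne hij, update_of_ne hjk.symm] using
      hasDerivAt_cosLaw_adjacent (hl i).ne' (hl j).ne' (hl k).ne'
  have hcosk : cos (a l k) = cosLaw (l k) (l i) (l j) :=
    (ha l hl htri k i j hik.symm hij hjk.symm).2
  rw [hd.unique hdi, hcosk]
  convert hdj using 1
  ring
end

section
/- For a spherical triangle with angles a_i defined as functions of edge lengths (l1, l2, l3) by the spherical cosine law, one has ∂a_i/∂l_i = sin(l_i)/A, where A = sin(a_i)·sin(l_j)·sin(l_k) is the A-invariant ({i,j,k} = {1,2,3}). -/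
/-!
The cosine law holds on an open set of edge lengths, and `arccos` inverts `cos` on `[0, π]`, so
near `l` the angle is `a_i = arccos ((cos l_i - cos l_j cos l_k) / (sin l_j sin l_k))`.
Since `arccos' u = -1 / √(1 - u²) = -1 / sin a_i`, differentiating in `l_i` gives
`sin l_i / (sin a_i sin l_j sin l_k)`.
-/

open Real Filter Topology

def sphericalEdgeDomain : Set (Fin 3 → ℝ) :=
  {x | (∀ i, x i ∈ Set.Ioo 0 π) ∧
    (∀ i j k : Fin 3, i ≠ j → j ≠ k → i ≠ k → x i < x j + x k) ∧ x 0 + x 1 + x 2 < 2 * π}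

theorem isOpen_sphericalEdgeDomain : IsOpen sphericalEdgeDomain := by
  have hcoord (i : Fin 3) : Continuous fun x : Fin 3 → ℝ => x i := continuous_apply i
  simp only [sphericalEdgeDomain, Set.ofPred_and, Set.ofPred_forall]
  refine .inter ?_ (.inter ?_ ?_)
  · exact isOpen_iInter_of_finite fun i => isOpen_Ioo.preimage (hcoord i)
  · exact isOpen_iInter_of_finite fun i => isOpen_iInter_of_finite fun j =>
      isOpen_iInter_of_finite fun k => isOpen_iInter_of_finite fun _ =>
      isOpen_iInter_of_finite fun _ => isOpen_iInter_of_finite fun _ =>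
      isOpen_lt (hcoord i) ((hcoord j).add (hcoord k))
  · exact isOpen_lt (((hcoord 0).add (hcoord 1)).add (hcoord 2)) continuous_const

theorem eventually_update_mem_of_mem_nhds {ι : Type*} [DecidableEq ι] {s : Set (ι → ℝ)}
    {l : ι → ℝ} (hs : s ∈ 𝓝 l) (i : ι) :
    ∀ᶠ t in 𝓝 (l i), Function.update l i t ∈ s := by
  have hcont : Continuous (Function.update l i) := continuous_const.update i continuous_id
  exact hcont.continuousAt.preimage_mem_nhds (by rwa [Function.update_eq_self])

section CosineLaw

variable {l b c a : ℝ}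

theorem cos_eq_div_of_cos_law (hbc : sin b * sin c ≠ 0)
    (hcos : cos l = cos b * cos c + sin b * sin c * cos a) :
    cos a = (cos l - cos b * cos c) / (sin b * sin c) := by
  rw [hcos, add_sub_cancel_left, mul_div_cancel_left₀ _ hbc]

theorem eq_arccos_of_cos_law (ha : a ∈ Set.Icc 0 π) (hbc : sin b * sin c ≠ 0)
    (hcos : cos l = cos b * cos c + sin b * sin c * cos a) :
    a = arccos ((cos l - cos b * cos c) / (sin b * sin c)) := by
  rw [← cos_eq_div_of_cos_law hbc hcos, arccos_cos ha.1 ha.2]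

theorem hasDerivAt_arccos_of_cos_law (ha : a ∈ Set.Ioo 0 π) (hbc : sin b * sin c ≠ 0)
    (hcos : cos l = cos b * cos c + sin b * sin c * cos a) :
    HasDerivAt (fun t => arccos ((cos t - cos b * cos c) / (sin b * sin c)))
      (sin l / (sin a * sin b * sin c)) l := by
  have hsin : 0 < sin a := sin_pos_of_pos_of_lt_pi ha.1 ha.2
  have hsqrt : √(1 - cos a ^ 2) = sin a := by rw [← sin_sq, sqrt_sq hsin.le]
  have hne_neg_one : cos a ≠ -1 := fun h => by nlinarith [sin_sq_add_cos_sq a]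
  have hne_one : cos a ≠ 1 := fun h => by nlinarith [sin_sq_add_cos_sq a]
  have hinner : HasDerivAt (fun t => (cos t - cos b * cos c) / (sin b * sin c))
      (-sin l / (sin b * sin c)) l :=
    ((hasDerivAt_cos l).sub_const _).div_const _
  rw [cos_eq_div_of_cos_law hbc hcos] at hne_neg_one hne_one hsqrt
  refine ((hasDerivAt_arccos hne_neg_one hne_one).comp l hinner).congr_deriv ?_
  rw [hsqrt]
  field_simp

end CosineLaw

/-- For a spherical triangle with angles `a_i ∈ (0,π)` determined from the
edge lengths by the spherical cosine law, one has ∂a_i/∂l_i = sin(l_i)/A where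
A = sin(a_i)·sin(l_j)·sin(l_k) is the A-invariant. -/
theorem spherical_deriv_angle_self
    (a : (Fin 3 → ℝ) → Fin 3 → ℝ)
    (ha : ∀ x : Fin 3 → ℝ, (∀ i, x i ∈ Set.Ioo 0 π) →
      (∀ i j k : Fin 3, i ≠ j → j ≠ k → i ≠ k → x i < x j + x k) →
      (x 0 + x 1 + x 2 < 2 * π) →
      ∀ i j k : Fin 3, i ≠ j → j ≠ k → i ≠ k →
        a x i ∈ Set.Ioo 0 π ∧
        Real.cos (x i) = Real.cos (x j) * Real.cos (x k) +
          Real.sin (x j) * Real.sin (x k) * Real.cos (a x i))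
    (l : Fin 3 → ℝ) (hl : ∀ i, l i ∈ Set.Ioo 0 π)
    (htri : ∀ i j k : Fin 3, i ≠ j → j ≠ k → i ≠ k → l i < l j + l k)
    (hsum : l 0 + l 1 + l 2 < 2 * π)
    (i j k : Fin 3) (hij : i ≠ j) (hjk : j ≠ k) (hik : i ≠ k) :
    HasDerivAt (fun t => a (Function.update l i t) i)
      (Real.sin (l i) / (Real.sin (a l i) * Real.sin (l j) * Real.sin (l k))) (l i) := by
  have hsin (m : Fin 3) : sin (l m) ≠ 0 := (sin_pos_of_pos_of_lt_pi (hl m).1 (hl m).2).ne'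
  have hbc : sin (l j) * sin (l k) ≠ 0 := mul_ne_zero (hsin j) (hsin k)
  obtain ⟨ha_mem, hcos⟩ := ha l hl htri hsum i j k hij hjk hik
  refine (hasDerivAt_arccos_of_cos_law ha_mem hbc hcos).congr_of_eventuallyEq ?_
  have hnhds : sphericalEdgeDomain ∈ 𝓝 l :=
    isOpen_sphericalEdgeDomain.mem_nhds ⟨hl, htri, hsum⟩
  filter_upwards [eventually_update_mem_of_mem_nhds hnhds i] with t ⟨ht, ht_tri, ht_sum⟩
  obtain ⟨hat_mem, hcos_t⟩ := ha _ ht ht_tri ht_sum i j k hij hjk hik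
  rw [Function.update_self, Function.update_of_ne hij.symm, Function.update_of_ne hik.symm]
    at hcos_t
  exact eq_arccos_of_cos_law (Set.Ioo_subset_Icc_self hat_mem) hbc hcos_t
end

section
/- For a spherical triangle with angles a_i defined as functions of edge lengths via the spherical cosine law, one has ∂a_i/∂l_j = −(∂a_i/∂l_i)·cos(a_k), where {i,j,k} = {1,2,3}. -/
open Real Filter Topology

/-!
Near a nondegenerate triangle the angle opposite the side `a` is given explicitly by the cosine
law as `arccos ((cos a - cos b * cos c) / (sin b * sin c))`. Differentiating this in `a` gives
`sin a / (sin b * sin c * sin A)`, and in `b` gives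
`-(sin b * cos c - cos b * sin c * cos A) / (sin b * sin c * sin A)`. By the five-part formula
the last numerator is `sin a * cos C`, with `C` the angle opposite `c`.
-/

/-- The angle opposite the side `a` of a spherical triangle with sides `a, b, c`. -/
noncomputable def sphericalAngle (a b c : ℝ) : ℝ :=
  arccos ((cos a - cos b * cos c) / (sin b * sin c))

def IsSphericalTriangle (x : Fin 3 → ℝ) : Prop :=
  (∀ i, x i ∈ Set.Ioo 0 π) ∧ (∀ i j k : Fin 3, i ≠ j → j ≠ k → i ≠ k → x i < x j + x k) ∧
    x 0 + x 1 + x 2 < 2 * π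

theorem IsSphericalTriangle.eventually {l : Fin 3 → ℝ} (hl : IsSphericalTriangle l) :
    ∀ᶠ x in 𝓝 l, IsSphericalTriangle x := by
  obtain ⟨hside, htri, hsum⟩ := hl
  have hcoord (i : Fin 3) : Continuous fun x : Fin 3 → ℝ => x i := continuous_apply i
  refine (eventually_all.2 fun i => ?_).and ((eventually_all.2 fun i => eventually_all.2 fun j =>
    eventually_all.2 fun k => ?_).and ?_)
  · exact (hcoord i).continuousAt.eventually_mem (isOpen_Ioo.mem_nhds (hside i))
  · simp only [eventually_imp_distrib_left]
    intro hij hjk hik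
    exact (hcoord i).continuousAt.eventually_lt ((hcoord j).add (hcoord k)).continuousAt
      (htri i j k hij hjk hik)
  · exact (((hcoord 0).add (hcoord 1)).add (hcoord 2)).continuousAt.eventually_lt
      continuousAt_const hsum

section CosineLaw

variable {a b c A C : ℝ}

theorem cos_law_quotient_eq (hb : sin b ≠ 0) (hc : sin c ≠ 0)
    (hlaw : cos a = cos b * cos c + sin b * sin c * cos A) :
    (cos a - cos b * cos c) / (sin b * sin c) = cos A := by
  rw [div_eq_iff (mul_ne_zero hb hc)]
  linear_combination hlaw

theorem sphericalAngle_eq_of_cos_law (hA : A ∈ Set.Icc 0 π) (hb : sin b ≠ 0) (hc : sin c ≠ 0)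
    (hlaw : cos a = cos b * cos c + sin b * sin c * cos A) :
    sphericalAngle a b c = A := by
  rw [sphericalAngle, cos_law_quotient_eq hb hc hlaw, arccos_cos hA.1 hA.2]

theorem hasDerivAt_arccos_cos (hA : A ∈ Set.Ioo 0 π) :
    HasDerivAt arccos (-1 / sin A) (cos A) := by
  have hsin : 0 < sin A := sin_pos_of_pos_of_lt_pi hA.1 hA.2
  have hcos : cos A ^ 2 < 1 := by nlinarith [sin_sq_add_cos_sq A]
  have hsqrt : √(1 - cos A ^ 2) = sin A := by
    rw [← sin_arccos, arccos_cos hA.1.le hA.2.le]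
  simpa [hsqrt, neg_div] using
    hasDerivAt_arccos (by nlinarith : cos A ≠ -1) (by nlinarith : cos A ≠ 1)

theorem hasDerivAt_sphericalAngle_left (hA : A ∈ Set.Ioo 0 π) (hb : sin b ≠ 0) (hc : sin c ≠ 0)
    (hlaw : cos a = cos b * cos c + sin b * sin c * cos A) :
    HasDerivAt (fun t => sphericalAngle t b c) (sin a / (sin b * sin c * sin A)) a := by
  have hquot : HasDerivAt (fun t => (cos t - cos b * cos c) / (sin b * sin c))
      (-sin a / (sin b * sin c)) a :=
    ((hasDerivAt_cos a).sub_const _).div_const _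
  have harccos := hasDerivAt_arccos_cos hA
  rw [← cos_law_quotient_eq hb hc hlaw] at harccos
  refine (harccos.comp a hquot).congr_deriv ?_
  field_simp

theorem hasDerivAt_sphericalAngle_middle (hA : A ∈ Set.Ioo 0 π) (hb : sin b ≠ 0)
    (hc : sin c ≠ 0) (hlaw : cos a = cos b * cos c + sin b * sin c * cos A) :
    HasDerivAt (fun t => sphericalAngle a t c)
      (-(sin b * cos c - cos b * sin c * cos A) / (sin b * sin c * sin A)) b := by
  have hquot : HasDerivAt (fun t => (cos a - cos t * cos c) / (sin t * sin c))
      ((sin b * cos c * (sin b * sin c) - (cos a - cos b * cos c) * (cos b * sin c)) /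
        (sin b * sin c) ^ 2) b :=
    (((hasDerivAt_cos b).mul_const _).const_sub _).div ((hasDerivAt_sin b).mul_const _)
      (mul_ne_zero hb hc) |>.congr_deriv (by ring)
  have harccos := hasDerivAt_arccos_cos hA
  rw [← cos_law_quotient_eq hb hc hlaw] at harccos
  refine (harccos.comp b hquot).congr_deriv ?_
  rw [hlaw]
  field_simp
  ring

/-- The five-part formula of spherical trigonometry. -/
theorem sin_mul_cos_eq_of_cos_law (hb : sin b ≠ 0)
    (hA : cos a = cos b * cos c + sin b * sin c * cos A)
    (hC : cos c = cos a * cos b + sin a * sin b * cos C) :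
    sin a * cos C = sin b * cos c - cos b * sin c * cos A := by
  refine mul_left_cancel₀ hb ?_
  linear_combination -hC - cos c * sin_sq_add_cos_sq b - cos b * hA

end CosineLaw

/-- For a spherical triangle with angles `a_i ∈ (0,π)` determined from the
edge lengths by the spherical cosine law, one has ∂a_i/∂l_j = −(∂a_i/∂l_i)·cos(a_k). -/
theorem spherical_deriv_angle_other
    (a : (Fin 3 → ℝ) → Fin 3 → ℝ)
    (ha : ∀ x : Fin 3 → ℝ, (∀ i, x i ∈ Set.Ioo 0 π) →
      (∀ i j k : Fin 3, i ≠ j → j ≠ k → i ≠ k → x i < x j + x k) →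
      (x 0 + x 1 + x 2 < 2 * π) →
      ∀ i j k : Fin 3, i ≠ j → j ≠ k → i ≠ k →
        a x i ∈ Set.Ioo 0 π ∧
        Real.cos (x i) = Real.cos (x j) * Real.cos (x k) +
          Real.sin (x j) * Real.sin (x k) * Real.cos (a x i))
    (l : Fin 3 → ℝ) (hl : ∀ i, l i ∈ Set.Ioo 0 π)
    (htri : ∀ i j k : Fin 3, i ≠ j → j ≠ k → i ≠ k → l i < l j + l k)
    (hsum : l 0 + l 1 + l 2 < 2 * π)
    (i j k : Fin 3) (hij : i ≠ j) (hjk : j ≠ k) (hik : i ≠ k)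
    (d : ℝ) (hd : HasDerivAt (fun t => a (Function.update l i t) i) d (l i)) :
    HasDerivAt (fun t => a (Function.update l j t) i)
      (-d * Real.cos (a l k)) (l j) := by
  have hl' : IsSphericalTriangle l := ⟨hl, htri, hsum⟩
  have hsin {x : Fin 3 → ℝ} (hx : IsSphericalTriangle x) (m : Fin 3) : sin (x m) ≠ 0 :=
    (sin_pos_of_pos_of_lt_pi (hx.1 m).1 (hx.1 m).2).ne'
  have hangle : ∀ᶠ x in 𝓝 l, a x i = sphericalAngle (x i) (x j) (x k) := by
    filter_upwards [hl'.eventually] with x hx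
    obtain ⟨hA, hlaw⟩ := ha x hx.1 hx.2.1 hx.2.2 i j k hij hjk hik
    exact (sphericalAngle_eq_of_cos_law (Set.Ioo_subset_Icc_self hA) (hsin hx j) (hsin hx k)
      hlaw).symm
  have hupdate (m : Fin 3) : Tendsto (Function.update l m) (𝓝 (l m)) (𝓝 l) :=
    (continuous_const.update m continuous_id).tendsto' _ _ (Function.update_eq_self m l)
  obtain ⟨hAi, hlawi⟩ := ha l hl htri hsum i j k hij hjk hik
  obtain ⟨-, hlawk⟩ := ha l hl htri hsum k i j hik.symm hij hjk.symm
  have hdi : d = sin (l i) / (sin (l j) * sin (l k) * sin (a l i)) := by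
    refine hd.unique <| (hasDerivAt_sphericalAngle_left hAi (hsin hl' j) (hsin hl' k)
      hlawi).congr_of_eventuallyEq ?_
    filter_upwards [(hupdate i).eventually hangle] with t ht
    simp [ht, Function.update_of_ne hij.symm, Function.update_of_ne hik.symm]
  refine ((hasDerivAt_sphericalAngle_middle hAi (hsin hl' j) (hsin hl' k)
    hlawi).congr_of_eventuallyEq ?_).congr_deriv ?_
  · filter_upwards [(hupdate j).eventually hangle] with t ht
    simp [ht, Function.update_of_ne hij, Function.update_of_ne hjk.symm]
  · rw [hdi, ← sin_mul_cos_eq_of_cos_law (hsin hl' j) hlawi hlawk]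
    ring
end

section
/- With notation as for a Euclidean tetrahedron and P^{ij}_{rs} = (1/(sin a_{ij} sin a_{rs})) · ∂a_{ij}/∂x_{rs}: assuming P^{ij}_{rs} = P^{rs}_{ij} for all pairs and P^{ij}_{ik} = −P^{ij}_{kl} cos(a_{jk}) for pairwise distinct i,j,k,l, it follows that P^{ij}_{rs} = P^{i'j'}_{r's'} whenever {i,j} ≠ {r,s}, where {a',b'} denotes the complement of {a,b} in {1,2,3,4}. -/
open Real

/-! The relation (iii) expresses `P^{xy}_{xz}` through `P^{xy}_{zw}` and `cos a_{yz}`; applied at the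
vertex `w` instead of `x`, it expresses `P^{wz}_{wy}` through `P^{wz}_{yx}` and `cos a_{zy}`. By the
Schläfli symmetry and `a_{yz} = a_{zy}` the right-hand sides agree, which is the complementarity
symmetry for two pairs sharing an element. Two disjoint pairs are each other's complements, and
there the claim is the Schläfli symmetry itself. -/

theorem compl_pair_eq_pair_fin_four : ∀ x y z w : Fin 4, x ≠ y → x ≠ z → x ≠ w → y ≠ z → y ≠ w →
    z ≠ w → ({x, y} : Finset (Fin 4))ᶜ = {z, w} := by
  decide

theorem pair_eq_compl_or_exists_common_fin_four : ∀ i j r s : Fin 4, i ≠ j → r ≠ s →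
    ({i, j} : Finset (Fin 4)) ≠ {r, s} →
    ({r, s} : Finset (Fin 4)) = {i, j}ᶜ ∨
      ∃ x y z w : Fin 4, x ≠ y ∧ x ≠ z ∧ x ≠ w ∧ y ≠ z ∧ y ≠ w ∧ z ≠ w ∧
        ({i, j} : Finset (Fin 4)) = {x, y} ∧ ({r, s} : Finset (Fin 4)) = {x, z} := by
  decide

theorem eq_of_pair_eq_pair {α β : Type*} [DecidableEq α] {P : α → α → α → α → β}
    (hP_pair : ∀ p q r s, P p q r s = P q p r s ∧ P p q r s = P p q s r)
    {p q u v p' q' u' v' : α} (hpq : ({p, q} : Finset α) = {p', q'})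
    (huv : ({u, v} : Finset α) = {u', v'}) : P p q u v = P p' q' u' v' := by
  rw [← Finset.coe_inj, Finset.coe_pair, Finset.coe_pair, Set.pair_eq_pair_iff] at hpq huv
  rcases hpq with ⟨rfl, rfl⟩ | ⟨rfl, rfl⟩ <;> rcases huv with ⟨rfl, rfl⟩ | ⟨rfl, rfl⟩
  all_goals simp only [← (hP_pair _ _ _ _).1, ← (hP_pair _ _ _ _).2]

theorem P_shared_eq_complement {P : Fin 4 → Fin 4 → Fin 4 → Fin 4 → ℝ} {a : Fin 4 → Fin 4 → ℝ}
    (ha_symm : ∀ p q, a p q = a q p)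
    (hP_pair : ∀ p q r s, P p q r s = P q p r s ∧ P p q r s = P p q s r)
    (hschlaefli : ∀ p q r s, P p q r s = P r s p q)
    (hiii : ∀ i j k l : Fin 4, i ≠ j → i ≠ k → i ≠ l → j ≠ k → j ≠ l → k ≠ l →
      P i j i k = -(P i j k l) * Real.cos (a j k))
    {x y z w : Fin 4} (hxy : x ≠ y) (hxz : x ≠ z) (hxw : x ≠ w) (hyz : y ≠ z) (hyw : y ≠ w)
    (hzw : z ≠ w) : P x y x z = P z w y w := by
  have at_x := hiii x y z w hxy hxz hxw hyz hyw hzw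
  have at_w := hiii w z y x hzw.symm hyw.symm hxw.symm hyz.symm hxz.symm hxy.symm
  have h_far : P w z y x = P x y z w := by
    rw [hschlaefli]
    exact eq_of_pair_eq_pair hP_pair (Finset.pair_comm _ _) (Finset.pair_comm _ _)
  have h_near : P z w y w = P w z w y :=
    eq_of_pair_eq_pair hP_pair (Finset.pair_comm _ _) (Finset.pair_comm _ _)
  rw [at_x, h_near, at_w, h_far, ha_symm]

/-- for quantities `P^{ij}_{rs}` indexed by unordered pairs of distinct
elements of {1,2,3,4}, the Schläfli symmetry (i) and the relation (iii) imply the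
complementarity symmetry (v): `P^{ij}_{rs} = P^{i'j'}_{r's'}` whenever `{i,j} ≠ {r,s}`,
where `{a',b'}` is the complement of `{a,b}` in {1,2,3,4}. -/
theorem P_complement_symmetry
    (P : Fin 4 → Fin 4 → Fin 4 → Fin 4 → ℝ)
    (a : Fin 4 → Fin 4 → ℝ)
    (ha_symm : ∀ p q, a p q = a q p)
    (hP_pair : ∀ p q r s, P p q r s = P q p r s ∧ P p q r s = P p q s r)
    (hschlaefli : ∀ p q r s, P p q r s = P r s p q)
    (hiii : ∀ i j k l : Fin 4, i ≠ j → i ≠ k → i ≠ l → j ≠ k → j ≠ l → k ≠ l →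
      P i j i k = -(P i j k l) * Real.cos (a j k)) :
    ∀ i j r s i' j' r' s' : Fin 4, i ≠ j → r ≠ s →
      ({i, j} : Finset (Fin 4)) ≠ {r, s} →
      ({i', j'} : Finset (Fin 4)) = ({i, j} : Finset (Fin 4))ᶜ →
      ({r', s'} : Finset (Fin 4)) = ({r, s} : Finset (Fin 4))ᶜ →
      P i j r s = P i' j' r' s' := by
  intro i j r s i' j' r' s' hij hrs hne hc_ij hc_rs
  rcases pair_eq_compl_or_exists_common_fin_four i j r s hij hrs hne with
    hdisj | ⟨x, y, z, w, hxy, hxz, hxw, hyz, hyw, hzw, h_ij, h_rs⟩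
  · have h_i'j' : ({i', j'} : Finset (Fin 4)) = {r, s} := by rw [hc_ij, hdisj]
    have h_r's' : ({r', s'} : Finset (Fin 4)) = {i, j} := by rw [hc_rs, hdisj, compl_compl]
    rw [hschlaefli]
    exact eq_of_pair_eq_pair hP_pair h_i'j'.symm h_r's'.symm
  · have h_i'j' : ({i', j'} : Finset (Fin 4)) = {z, w} := by
      rw [hc_ij, h_ij, compl_pair_eq_pair_fin_four x y z w hxy hxz hxw hyz hyw hzw]
    have h_r's' : ({r', s'} : Finset (Fin 4)) = {y, w} := by
      rw [hc_rs, h_rs, compl_pair_eq_pair_fin_four x z y w hxz hxy hxw hyz.symm hzw hyw]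
    calc P i j r s = P x y x z := eq_of_pair_eq_pair hP_pair h_ij h_rs
      _ = P z w y w :=
        P_shared_eq_complement ha_symm hP_pair hschlaefli hiii hxy hxz hxw hyz hyw hzw
      _ = P i' j' r' s' := eq_of_pair_eq_pair hP_pair h_i'j'.symm h_r's'.symm
end
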